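/- Let n be an even natural number with 4 ≤ n and let κ, η be real numbers with η ≤ κ. Then WI(n,κ,η) = (n²/8)·(κ+η)·[4 ∣ n] + (n/2)·(((n−2)/4)·κ + ((n+2)/4)·η)·[¬(4 ∣ n)] + Σ_{k=1}^{n/2−1} (n·k/2)·(κ + η), i.e. the Wiener index decomposes as the antipodal contribution plus the contributions of pairs at each cycle distance k with 1 ≤ k < n/2, and the contribution at each such k is (n·k/2)·(κ + η). -/

import Mathlib

/-- Edge weight: the edge from `i` to `i+1` has weight `κ` if `i.val` is even,
and `η` if `i.val` is odd. -/
noncomputable def w (n : ℕ) (κ η : ℝ) (i : ZMod n) : ℝ :=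
  if Even i.val then κ else η

/-- Forward arc weight: `A u k = Σ_{j=0}^{k-1} w (u + j)`. -/
noncomputable def A (n : ℕ) (κ η : ℝ) (u : ZMod n) (k : ℕ) : ℝ :=
  ∑ j ∈ Finset.range k, w n κ η (u + (j : ZMod n))

/-- Cycle distance: `min (m, n - m)` where `v = u + m`, `0 ≤ m < n`. -/
def cdist (n : ℕ) (u v : ZMod n) : ℕ :=
  min (v - u).val (n - (v - u).val)

/-- Geodesic weight between `u` and `v`. -/
noncomputable def ds (n : ℕ) (κ η : ℝ) (u v : ZMod n) : ℝ :=
  if u = v then 0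
  else if cdist n u v < n / 2 then
    (if v = u + (cdist n u v : ZMod n) then A n κ η u (cdist n u v)
     else A n κ η v (cdist n u v))
  else min (A n κ η u (n / 2)) (A n κ η v (n / 2))

/-- Wiener index: sum of `ds` over unordered pairs of distinct vertices. -/
noncomputable def WI (n : ℕ) [NeZero n] (κ η : ℝ) : ℝ :=
  (1 / 2) * ∑ u : ZMod n, ∑ v : ZMod n, ds n κ η u v

/-! Consecutive edges weigh `κ + η` together, so an arc of length `2t` weighs `t (κ + η)`
wherever it starts, and one of length `2t + 1` weighs that plus the weight of its first edge.
Summed over all `n` pairs `(u, u + m)` at a fixed offset `m`, the geodesic weight is therefore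
`min m (n - m)` times the total weight `(n / 2) (κ + η)` of the cycle, by translation invariance.
At the antipodal offset `n / 2` the two half-cycles from `u` weigh the same when `4 ∣ n`, and
otherwise differ by `κ - η`, so the lighter one has one `η`-edge more than `κ`-edges. -/

open Finset

theorem Finset.sum_range_two_mul_eq_add_sum_Ico_reflect {M : Type*} [AddCommMonoid M]
    (f : ℕ → M) {h : ℕ} (hh : 0 < h) :
    ∑ m ∈ range (2 * h), f m = f 0 + f h + ∑ k ∈ Ico 1 h, (f k + f (2 * h - k)) := by
  have hlow : ∑ m ∈ range (h + 1), f m = f 0 + f h + ∑ k ∈ Ico 1 h, f k := by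
    rw [sum_range_succ, range_eq_Ico, sum_eq_sum_Ico_succ_bot hh]
    abel
  have hhigh : ∑ k ∈ Ico 1 h, f (2 * h - k) = ∑ m ∈ Ico (h + 1) (2 * h), f m := by
    rw [sum_Ico_reflect f 1 (by omega : h ≤ 2 * h + 1), show 2 * h + 1 - h = h + 1 by omega,
      Nat.add_sub_cancel]
  rw [sum_add_distrib, hhigh, ← add_assoc, ← hlow, range_eq_Ico, range_eq_Ico,
    sum_Ico_consecutive _ (Nat.zero_le _) (by omega)]

theorem sum_range_two_mul_ite_min (X S : ℝ) {h : ℕ} (hh : 0 < h) :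
    ∑ m ∈ range (2 * h), (if m = h then X else (min m (2 * h - m) : ℕ) * S) =
      X + 2 * ∑ k ∈ Ico 1 h, (k : ℝ) * S := by
  rw [sum_range_two_mul_eq_add_sum_Ico_reflect _ hh, if_neg hh.ne, if_pos rfl, mul_sum]
  have hpair : ∀ k ∈ Ico 1 h, ((if k = h then X else (min k (2 * h - k) : ℕ) * S) +
      if 2 * h - k = h then X else (min (2 * h - k) (2 * h - (2 * h - k)) : ℕ) * S) =
      2 * ((k : ℝ) * S) := by
    intro k hk
    rw [mem_Ico] at hk
    rw [if_neg (by omega), if_neg (by omega), show min k (2 * h - k) = k by omega,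
      show min (2 * h - k) (2 * h - (2 * h - k)) = k by omega]
    ring
  rw [sum_congr rfl hpair]
  simp

theorem ZMod.sum_eq_sum_range {M : Type*} [AddCommMonoid M] {n : ℕ} [NeZero n]
    (f : ZMod n → M) : ∑ u : ZMod n, f u = ∑ m ∈ range n, f m := by
  refine sum_nbij' ZMod.val Nat.cast (by simp [ZMod.val_lt]) (by simp) (by simp) ?_ (by simp)
  intro m hm
  simp [ZMod.val_natCast_of_lt (mem_range.mp hm)]

theorem ZMod.sum_sum_eq_sum_range_sum_add {M : Type*} [AddCommMonoid M] {n : ℕ} [NeZero n]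
    (f : ZMod n → ZMod n → M) :
    ∑ u : ZMod n, ∑ v : ZMod n, f u v = ∑ m ∈ range n, ∑ u : ZMod n, f u (u + m) := by
  calc ∑ u : ZMod n, ∑ v : ZMod n, f u v
      = ∑ u : ZMod n, ∑ m ∈ range n, f u (u + m) := sum_congr rfl fun u _ => by
        rw [← ZMod.sum_eq_sum_range (fun d => f u (u + d))]
        exact (Fintype.sum_equiv (Equiv.addLeft u) _ _ fun _ => rfl).symm
    _ = ∑ m ∈ range n, ∑ u : ZMod n, f u (u + m) := sum_comm

theorem ZMod.even_val_add_natCast_iff {n : ℕ} [NeZero n] (hn : Even n) (u : ZMod n) (j : ℕ) :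
    Even (u + j).val ↔ Even (u.val + j) := by
  have h2 : 2 ∣ n := even_iff_two_dvd.mp hn
  rw [ZMod.val_add, ZMod.val_natCast, Nat.even_iff, Nat.even_iff, Nat.mod_mod_of_dvd _ h2,
    Nat.add_mod, Nat.mod_mod_of_dvd _ h2, ← Nat.add_mod]

section WeightedCycle

variable {n : ℕ} [NeZero n] {κ η : ℝ}

theorem w_add_w_add_one (hn : Even n) (u : ZMod n) : w n κ η u + w n κ η (u + 1) = κ + η := by
  have hpar := ZMod.even_val_add_natCast_iff hn u 1
  rw [Nat.cast_one, Nat.even_add_one] at hpar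
  unfold w
  by_cases hu : Even u.val <;> simp [hu, hpar, add_comm]

theorem w_add_two_mul (hn : Even n) (u : ZMod n) (t : ℕ) :
    w n κ η (u + (2 * t : ℕ)) = w n κ η u := by
  induction t with
  | zero => simp
  | succ t ih =>
    have h1 := w_add_w_add_one (κ := κ) (η := η) hn (u + (2 * t : ℕ))
    have h2 := w_add_w_add_one (κ := κ) (η := η) hn (u + (2 * t : ℕ) + 1)
    have hcast : u + ((2 * (t + 1) : ℕ) : ZMod n) = u + (2 * t : ℕ) + 1 + 1 := by
      push_cast; ring
    rw [hcast]
    linarith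

theorem A_two_mul (hn : Even n) (u : ZMod n) (t : ℕ) : A n κ η u (2 * t) = t * (κ + η) := by
  induction t with
  | zero => simp [A]
  | succ t ih =>
    have hcast : u + ((2 * t + 1 : ℕ) : ZMod n) = u + (2 * t : ℕ) + 1 := by push_cast; ring
    rw [show 2 * (t + 1) = 2 * t + 1 + 1 by ring, A, sum_range_succ, sum_range_succ, ← A, ih,
      hcast, add_assoc, w_add_w_add_one hn]
    push_cast; ring

theorem A_two_mul_add_one (hn : Even n) (u : ZMod n) (t : ℕ) :
    A n κ η u (2 * t + 1) = t * (κ + η) + w n κ η u := by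
  rw [A, sum_range_succ, ← A, A_two_mul hn, w_add_two_mul hn]

theorem sum_w (hn : Even n) : ∑ u : ZMod n, w n κ η u = (n / 2 : ℕ) * (κ + η) := by
  obtain ⟨t, ht⟩ := hn
  have h := A_two_mul (κ := κ) (η := η) ⟨t, ht⟩ (0 : ZMod n) t
  rw [show 2 * t = n by omega] at h
  simp only [A, zero_add] at h
  rw [ZMod.sum_eq_sum_range, h, show n / 2 = t by omega]

theorem sum_A (hn : Even n) (k : ℕ) :
    ∑ u : ZMod n, A n κ η u k = k * ((n / 2 : ℕ) * (κ + η)) := by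
  simp only [A]
  rw [sum_comm, sum_congr rfl fun (j : ℕ) _ =>
      Fintype.sum_equiv (Equiv.addRight (j : ZMod n)) (fun x => w n κ η (x + j)) (w n κ η)
        (fun _ => rfl), sum_const, card_range, nsmul_eq_mul, sum_w hn]

end WeightedCycle

section Geodesic

variable {n : ℕ} {κ η : ℝ}

theorem min_w_eq_of_add_eq (hηκ : η ≤ κ) {u v : ZMod n}
    (h : w n κ η u + w n κ η v = κ + η) : min (w n κ η u) (w n κ η v) = η := by
  unfold w at *
  split_ifs at h ⊢ <;> linarith [min_self κ, min_self η, min_eq_right hηκ, min_eq_left hηκ]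

theorem min_A_antipodal [NeZero n] (hn : Even n) (hηκ : η ≤ κ) (u : ZMod n) :
    min (A n κ η u (n / 2)) (A n κ η (u + (n / 2 : ℕ)) (n / 2)) =
      if 4 ∣ n then (n / 4 : ℝ) * (κ + η)
      else ((n - 2) / 4 : ℝ) * κ + ((n + 2) / 4 : ℝ) * η := by
  obtain ⟨r, hr⟩ := hn
  obtain ⟨q, hq | hq⟩ := Nat.even_or_odd' (n / 2)
  · have hnq : (n : ℝ) = 4 * q := by exact_mod_cast (by omega : n = 4 * q)
    rw [hq, A_two_mul ⟨r, hr⟩, A_two_mul ⟨r, hr⟩, min_self, if_pos (by omega), hnq]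
    ring
  · have hnq : (n : ℝ) = 4 * q + 2 := by exact_mod_cast (by omega : n = 4 * q + 2)
    have hsum : w n κ η u + w n κ η (u + (2 * q + 1 : ℕ)) = κ + η := by
      rw [← w_add_two_mul ⟨r, hr⟩ u q, Nat.cast_succ, ← add_assoc,
        w_add_w_add_one ⟨r, hr⟩]
    rw [hq, A_two_mul_add_one ⟨r, hr⟩, A_two_mul_add_one ⟨r, hr⟩, min_add_add_left,
      min_w_eq_of_add_eq hηκ hsum, if_neg (by omega), hnq]
    ring

theorem add_natCast_ne_self {m : ℕ} (hm0 : 0 < m) (hmn : m < n) (u : ZMod n) :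
    u + m ≠ u := by
  rw [Ne, add_eq_left, ZMod.natCast_eq_zero_iff]
  exact Nat.not_dvd_of_pos_of_lt hm0 hmn

theorem cdist_add_natCast {m : ℕ} (hmn : m < n) (u : ZMod n) :
    cdist n u (u + m) = min m (n - m) := by
  rw [cdist, add_sub_cancel_left, ZMod.val_natCast_of_lt hmn]

theorem ds_add_natCast_of_lt {m : ℕ} (hm0 : 0 < m) (hmh : m < n / 2) (u : ZMod n) :
    ds n κ η u (u + m) = A n κ η u m := by
  have hmn : m < n := by omega
  rw [ds, if_neg (add_natCast_ne_self hm0 hmn u).symm, cdist_add_natCast hmn,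
    min_eq_left (by omega), if_pos hmh, if_pos rfl]

theorem ds_add_natCast_of_half_lt (hn : Even n) {m : ℕ} (hmh : n / 2 < m) (hmn : m < n)
    (u : ZMod n) : ds n κ η u (u + m) = A n κ η (u + m) (n - m) := by
  obtain ⟨r, hr⟩ := hn
  have hne : u + m ≠ u + (n - m : ℕ) := by
    intro h
    have := congrArg ZMod.val (add_left_cancel h)
    rw [ZMod.val_natCast_of_lt hmn, ZMod.val_natCast_of_lt (by omega)] at this
    omega
  rw [ds, if_neg (add_natCast_ne_self (by omega) hmn u).symm, cdist_add_natCast hmn,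
    min_eq_right (by omega), if_pos (by omega), if_neg hne]

theorem ds_add_half (h2 : 2 ≤ n) (u : ZMod n) :
    ds n κ η u (u + (n / 2 : ℕ)) =
      min (A n κ η u (n / 2)) (A n κ η (u + (n / 2 : ℕ)) (n / 2)) := by
  have hmn : n / 2 < n := by omega
  rw [ds, if_neg (add_natCast_ne_self (by omega) hmn u).symm, cdist_add_natCast hmn,
    min_eq_left (by omega), if_neg (lt_irrefl _)]

theorem sum_ds_add_natCast_of_ne_half [NeZero n] (hn : Even n) {m : ℕ} (hmn : m < n)
    (hmh : m ≠ n / 2) :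
    ∑ u : ZMod n, ds n κ η u (u + m) = (min m (n - m) : ℕ) * ((n / 2 : ℕ) * (κ + η)) := by
  rcases Nat.eq_zero_or_pos m with rfl | hm0
  · simp [ds]
  rcases lt_or_gt_of_ne hmh with hlt | hgt
  · rw [sum_congr rfl fun u _ => ds_add_natCast_of_lt hm0 hlt u, sum_A hn,
      min_eq_left (by omega)]
  · rw [sum_congr rfl fun u _ => ds_add_natCast_of_half_lt hn hgt hmn u,
      Fintype.sum_equiv (Equiv.addRight (m : ZMod n)) (fun u => A n κ η (u + m) (n - m))
        (fun v => A n κ η v (n - m)) fun _ => rfl, sum_A hn, min_eq_right (by omega)]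

theorem sum_ds_add_half [NeZero n] (hn : Even n) (hηκ : η ≤ κ) :
    ∑ u : ZMod n, ds n κ η u (u + (n / 2 : ℕ)) =
      n * (if 4 ∣ n then (n / 4 : ℝ) * (κ + η)
        else ((n - 2) / 4 : ℝ) * κ + ((n + 2) / 4 : ℝ) * η) := by
  have h2 : 2 ≤ n := by obtain ⟨r, hr⟩ := hn; have := NeZero.pos n; omega
  simp only [ds_add_half h2, min_A_antipodal hn hηκ, sum_const, card_univ, ZMod.card,
    nsmul_eq_mul]

end Geodesic

theorem wiener_index_decomposition_general
    (n : ℕ) [NeZero n] (hE : Even n) (κ η : ℝ) (hηκ : η ≤ κ) :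
    WI n κ η =
      ((n : ℝ) ^ 2 / 8) * (κ + η) * (if 4 ∣ n then 1 else 0) +
      ((n : ℝ) / 2) * ((((n : ℝ) - 2) / 4) * κ + (((n : ℝ) + 2) / 4) * η) *
        (if 4 ∣ n then 0 else 1) +
      ∑ k ∈ Finset.Icc 1 (n / 2 - 1), ((n : ℝ) * (k : ℝ) / 2) * (κ + η) := by
  obtain ⟨h, rfl⟩ := hE.two_dvd
  have hh : 2 * h / 2 = h := by omega
  have hpos : 0 < h := Nat.pos_of_ne_zero fun h0 => NeZero.ne (2 * h) (by omega)
  have hantipodal := sum_ds_add_half (κ := κ) ⟨h, two_mul h⟩ hηκ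
  rw [hh] at hantipodal
  have hoffset : ∀ m ∈ range (2 * h), ∑ u : ZMod (2 * h), ds (2 * h) κ η u (u + m) =
      if m = h then ∑ u : ZMod (2 * h), ds (2 * h) κ η u (u + h)
      else (min m (2 * h - m) : ℕ) * (h * (κ + η)) := by
    intro m hm
    split_ifs with hmh
    · rw [hmh]
    · rw [sum_ds_add_natCast_of_ne_half ⟨h, two_mul h⟩ (mem_range.mp hm) (by omega), hh]
  have hdist : ∑ k ∈ Ico 1 h, ((2 * h : ℕ) * (k : ℝ) / 2) * (κ + η) =
      ∑ k ∈ Ico 1 h, (k : ℝ) * (h * (κ + η)) :=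
    sum_congr rfl fun k _ => by push_cast; ring
  rw [WI, ZMod.sum_sum_eq_sum_range_sum_add, sum_congr rfl hoffset,
    sum_range_two_mul_ite_min _ _ hpos, hantipodal, hh, ← Ico_add_one_right_eq_Icc,
    Nat.sub_one_add_one hpos.ne', hdist]
  split_ifs <;> push_cast <;> ring

theorem wiener_index_decomposition
    (n : ℕ) [NeZero n] (hE : Even n) (h4 : 4 ≤ n) (κ η : ℝ) (hηκ : η ≤ κ) :
    WI n κ η =
      ((n : ℝ) ^ 2 / 8) * (κ + η) * (if 4 ∣ n then 1 else 0) +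
      ((n : ℝ) / 2) * ((((n : ℝ) - 2) / 4) * κ + (((n : ℝ) + 2) / 4) * η) *
        (if 4 ∣ n then 0 else 1) +
      ∑ k ∈ Finset.Icc 1 (n / 2 - 1), ((n : ℝ) * (k : ℝ) / 2) * (κ + η) :=
  wiener_index_decomposition_general n hE κ η hηκ
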